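/- arXiv:2602.11077 — 3 statements merged into one kernel-verified Lean document; each statement's English description precedes it below -/
import Mathlib

section
/- Consider a single edge with two lanes, total demand d > 0 partitioned among finitely many groups g ∈ G with demands d^g > 0 (so Σ_g d^g = d) and pairwise distinct effective values of time v̂^g > 0. The edge latency ℓ is strictly increasing, and the express lane (lane 1) carries a toll τ > 0; group g's per-unit costs are c₁^g(x) = v̂^g · ℓ(x₁) + τ on lane 1 and c₂^g(x) = v̂^g · ℓ(x₂) on lane 2, where x_k = Σ_g y_k^g is the total lane-k flow. Suppose y = (y_k^g) with y₁^g + y₂^g = d^g and y_k^g ≥ 0 is a Wardrop equilibrium: for each g, y₁^g > 0 → c₁^g(x) ≤ c₂^g(x) and y₂^g > 0 → c₂^g(x) ≤ c₁^g(x). Then the equilibrium assigns the express lane in decreasing order of effective value of time: for any two groups g₁, g₂ with v̂^{g₁} > v̂^{g₂}, if y₁^{g₂} > 0 then y₁^{g₁} = d^{g₁}. -/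
/-- At a Wardrop equilibrium with heterogeneous effective values of time, the
express lane is filled in decreasing order of effective value of time. -/
theorem stmt2 {ι : Type*} [Fintype ι] (ℓ : ℝ → ℝ) (τ d : ℝ) (dG vhat : ι → ℝ)
    (y1 y2 : ι → ℝ) (x1 x2 : ℝ)
    (hτ : 0 < τ) (hd : 0 < d) (hdG : ∀ g, 0 < dG g) (hsum : ∑ g, dG g = d)
    (hv : ∀ g, 0 < vhat g) (hdist : Function.Injective vhat)
    (hmono : StrictMono ℓ)
    (hx1 : x1 = ∑ g, y1 g) (hx2 : x2 = ∑ g, y2 g)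
    (hnn : ∀ g, 0 ≤ y1 g ∧ 0 ≤ y2 g) (hdem : ∀ g, y1 g + y2 g = dG g)
    (heq : ∀ g, (0 < y1 g → vhat g * ℓ x1 + τ ≤ vhat g * ℓ x2) ∧
        (0 < y2 g → vhat g * ℓ x2 ≤ vhat g * ℓ x1 + τ)) :
    ∀ g1 g2, vhat g2 < vhat g1 → 0 < y1 g2 → y1 g1 = dG g1 := by
  intro g1 g2 hlt hy2
  -- from g2's lane-1 use: vhat g2 * (ℓ x2 - ℓ x1) ≥ τ
  have h2 := (heq g2).1 hy2
  have hgap : τ ≤ vhat g2 * (ℓ x2 - ℓ x1) := by nlinarith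
  have hgap0 : 0 < ℓ x2 - ℓ x1 := by
    by_contra h
    push_neg at h
    nlinarith [hv g2]
  -- g1's gap strictly exceeds τ
  have h1 : τ < vhat g1 * (ℓ x2 - ℓ x1) := by
    calc τ ≤ vhat g2 * (ℓ x2 - ℓ x1) := hgap
    _ < vhat g1 * (ℓ x2 - ℓ x1) := by nlinarith
  have hz : y2 g1 = 0 := by
    by_contra h
    have hpos : 0 < y2 g1 := lt_of_le_of_ne (hnn g1).2 (Ne.symm h)
    have := (heq g1).2 hpos
    nlinarith
  have := hdem g1
  linarith
end

section
/- Under the hypotheses of the previous comparison (matching eligible totals and ineligible flows, eligible latency cost weakly reduced), if additionally λ_R > λ_E, α < 1, τ > 0, and Σ_{g∈G^E} ŷ₁^g > 0, then the DBCP societal cost is STRICTLY smaller: f_D ≤ f_C − (λ_R − λ_E)(1−α)τ Σ_{g∈G^E} ŷ₁^g < f_C. -/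
open Finset

/-- Strict societal-cost comparison: if additionally λ_R > λ_E, α < 1, τ > 0
and some eligible flow uses the express lane, the DBCP societal cost is
strictly smaller than the CBCP societal cost, with gap
(λ_R − λ_E)(1−α)τ·(eligible express flow). -/
theorem stmt14 {ι : Type*} [Fintype ι] (elig : ι → Prop) [DecidablePred elig]
    (ℓ : ℝ → ℝ) (x1 x2 d τ α lE lI lR : ℝ) (v dG : ι → ℝ)
    (y1 y2 z1 z2 : ι → ℝ)
    (hmono : StrictMono ℓ) (hx : x1 + x2 = d)
    (hτ : 0 < τ) (hα : α ∈ Set.Icc (0:ℝ) 1) (hα1 : α < 1)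
    (hlE : 0 ≤ lE) (hlI : 0 ≤ lI) (hlR : 0 ≤ lR) (hRE : lE < lR)
    (hv : ∀ g, 0 < v g)
    (hynn : ∀ g, 0 ≤ y1 g ∧ 0 ≤ y2 g) (hznn : ∀ g, 0 ≤ z1 g ∧ 0 ≤ z2 g)
    (hdemy : ∀ g, y1 g + y2 g = dG g) (hdemz : ∀ g, z1 g + z2 g = dG g)
    (ha : ∑ g ∈ univ.filter elig, z1 g = ∑ g ∈ univ.filter elig, y1 g)
    (hb : ∀ g, ¬ elig g → z1 g = y1 g)
    (hc : ∑ g ∈ univ.filter elig, (v g * ℓ x1 * z1 g + v g * ℓ x2 * z2 g) ≤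
          ∑ g ∈ univ.filter elig, (v g * ℓ x1 * y1 g + v g * ℓ x2 * y2 g))
    (hpos : 0 < ∑ g ∈ univ.filter elig, z1 g) :
    (lE * ((∑ g ∈ univ.filter elig, (v g * ℓ x1 * z1 g + v g * ℓ x2 * z2 g)) +
          (1 - α) * τ * ∑ g ∈ univ.filter elig, z1 g) +
      lI * ∑ g ∈ univ.filter (fun g => ¬ elig g),
          ((v g * ℓ x1 + τ) * z1 g + v g * ℓ x2 * z2 g) -
      lR * ((1 - α) * τ * (∑ g ∈ univ.filter elig, z1 g) +
          τ * ∑ g ∈ univ.filter (fun g => ¬ elig g), z1 g) ≤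
    (lE * (∑ g ∈ univ.filter elig, (v g * ℓ x1 * y1 g + v g * ℓ x2 * y2 g)) +
      lI * ∑ g ∈ univ.filter (fun g => ¬ elig g),
          ((v g * ℓ x1 + τ) * y1 g + v g * ℓ x2 * y2 g) -
      lR * (τ * ∑ g ∈ univ.filter (fun g => ¬ elig g), y1 g)) -
      (lR - lE) * (1 - α) * τ * ∑ g ∈ univ.filter elig, z1 g) ∧
    (lE * (∑ g ∈ univ.filter elig, (v g * ℓ x1 * y1 g + v g * ℓ x2 * y2 g)) +
      lI * ∑ g ∈ univ.filter (fun g => ¬ elig g),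
          ((v g * ℓ x1 + τ) * y1 g + v g * ℓ x2 * y2 g) -
      lR * (τ * ∑ g ∈ univ.filter (fun g => ¬ elig g), y1 g)) -
      (lR - lE) * (1 - α) * τ * ∑ g ∈ univ.filter elig, z1 g <
    lE * (∑ g ∈ univ.filter elig, (v g * ℓ x1 * y1 g + v g * ℓ x2 * y2 g)) +
      lI * ∑ g ∈ univ.filter (fun g => ¬ elig g),
          ((v g * ℓ x1 + τ) * y1 g + v g * ℓ x2 * y2 g) -
      lR * (τ * ∑ g ∈ univ.filter (fun g => ¬ elig g), y1 g) := by
  have hI1 : ∑ g ∈ univ.filter (fun g => ¬ elig g),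
      ((v g * ℓ x1 + τ) * z1 g + v g * ℓ x2 * z2 g) =
      ∑ g ∈ univ.filter (fun g => ¬ elig g),
      ((v g * ℓ x1 + τ) * y1 g + v g * ℓ x2 * y2 g) := by
    refine Finset.sum_congr rfl fun g hg => ?_
    have hne := (Finset.mem_filter.mp hg).2
    have h1 := hb g hne
    have h2 : z2 g = y2 g := by
      have := hdemy g; have := hdemz g; linarith
    rw [h1, h2]
  have hI2 : ∑ g ∈ univ.filter (fun g => ¬ elig g), z1 g =
      ∑ g ∈ univ.filter (fun g => ¬ elig g), y1 g := by
    refine Finset.sum_congr rfl fun g hg => hb g (Finset.mem_filter.mp hg).2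
  have hgap : 0 < (lR - lE) * (1 - α) * τ * ∑ g ∈ univ.filter elig, z1 g := by
    apply mul_pos _ hpos
    apply mul_pos (mul_pos (by linarith) (by linarith)) hτ
  constructor
  · rw [hI1, hI2]
    have := mul_le_mul_of_nonneg_left hc hlE
    nlinarith
  · linarith
end

section
/- Single edge, single period. Suppose y is a Wardrop equilibrium of the (τ, α)-DBCP game (eligible groups pay discounted toll (1−α)τ, ineligible pay τ, costs as defined via a shared strictly increasing latency). Define B^g := τ · y₁^g for the eligible group g. Then y is also a Wardrop equilibrium of the (τ, B)-CBCP game, in which the eligible group pays no toll out of pocket but must satisfy the budget constraint τ · y₁^g ≤ B^g. That is, every DBCP equilibrium flow is a CBCP equilibrium flow for the budget that exactly finances its express-lane usage. -/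
/-- Every DBCP equilibrium flow is a CBCP equilibrium flow for the budget
B^g = τ·y₁^g that exactly finances its express-lane usage. -/
theorem stmt15 {ι : Type*} [Fintype ι] (elig : ι → Prop) [DecidablePred elig]
    (ℓ : ℝ → ℝ) (τ α : ℝ) (v dG y1 y2 : ι → ℝ) (x1 x2 : ℝ)
    (hx1 : x1 = ∑ g, y1 g) (hx2 : x2 = ∑ g, y2 g)
    (hmono : StrictMono ℓ) (hτ : 0 ≤ τ) (hα : α ∈ Set.Icc (0:ℝ) 1)
    (hv : ∀ g, 0 < v g) (hdG : ∀ g, 0 < dG g)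
    (hfeas : ∀ g, 0 ≤ y1 g ∧ 0 ≤ y2 g ∧ y1 g + y2 g = dG g)
    (heqD : ∀ g, ∀ z1 z2 : ℝ, 0 ≤ z1 → 0 ≤ z2 → z1 + z2 = dG g →
        0 ≤ (z1 - y1 g) * (v g * ℓ x1 + (if elig g then (1 - α) * τ else τ)) +
            (z2 - y2 g) * (v g * ℓ x2)) :
    (∀ g, ¬ elig g → ∀ z1 z2 : ℝ, 0 ≤ z1 → 0 ≤ z2 → z1 + z2 = dG g →
        0 ≤ (z1 - y1 g) * (v g * ℓ x1 + τ) + (z2 - y2 g) * (v g * ℓ x2)) ∧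
    (∀ g, elig g → ∀ z1 z2 : ℝ, 0 ≤ z1 → 0 ≤ z2 → z1 + z2 = dG g →
        τ * z1 ≤ τ * y1 g →
        0 ≤ (z1 - y1 g) * (v g * ℓ x1) + (z2 - y2 g) * (v g * ℓ x2)) := by
  constructor
  · intro g hg z1 z2 h1 h2 h3
    have := heqD g z1 z2 h1 h2 h3
    simpa [if_neg hg] using this
  · intro g hg z1 z2 h1 h2 h3 hb
    have hD := heqD g z1 z2 h1 h2 h3
    rw [if_pos hg] at hD
    have h1α : 0 ≤ 1 - α := by linarith [hα.2]
    have : (z1 - y1 g) * ((1 - α) * τ) ≤ 0 := by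
      have hz : (z1 - y1 g) * τ ≤ 0 := by nlinarith
      nlinarith
    nlinarith
end
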